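/- arXiv:1903.00243 — 3 statements merged into one kernel-verified Lean document; each statement's English description precedes it below -/
import Mathlib

section
/- On ℝ³ \ {0}, the matrix field M_{ij}(x) := (1/(16π|x|)) ( x_i x_j / |x|² + 3 δ_{ij} ) satisfies Δ M_{ki}(x) + ∑_j ∂_i ∂_j M_{jk}(x) = 0 for all i,k ∈ {1,2,3}. -/
open MeasureTheory Filter
open scoped BigOperators Topology RealInnerProductSpace

noncomputable section

abbrev E3 : Type := EuclideanSpace ℝ (Fin 3)

/-- Partial derivative in the `i`-th coordinate direction. -/
noncomputable def pd (i : Fin 3) (f : E3 → ℝ) (x : E3) : ℝ :=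
  fderiv ℝ f x (EuclideanSpace.single i 1)

/-- Euclidean Laplacian on `ℝ³`. -/
noncomputable def lap (f : E3 → ℝ) (x : E3) : ℝ :=
  ∑ i : Fin 3, pd i (pd i f) x

/-- The matrix field `M_{ij}(x) = (1/(16π|x|)) ( x_i x_j/|x|² + 3δ_{ij} )`. -/
noncomputable def Mmat (i j : Fin 3) (x : E3) : ℝ :=
  (1 / (16 * Real.pi * ‖x‖)) * (x i * x j / ‖x‖ ^ 2 + 3 * (if i = j then (1 : ℝ) else 0))

/-
Write `ρ = ‖x‖⁻¹`. Then `M_jk = (x_j x_k ρ³ + 3 δ_jk ρ) / (16π)` everywhere (both sides vanish at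
`0`) and `∂_m ρ = -x_m ρ³`, so every derivative of `M` is a polynomial in `x` and `ρ`, reduced by
`ρ² ∑ x_l² = 1`. Contracting the explicit second derivatives, `Δ M_ki` and `∑_j ∂_i ∂_j M_jk` come
out as `∓(1/8π)(3 x_i x_k ρ⁵ - δ_ik ρ³)`, i.e. as `∓(1/8π)` times the Hessian of `1/‖x‖`, and cancel.
-/

section
variable {F : Type*} [NormedAddCommGroup F] [InnerProductSpace ℝ F] {x : F}

theorem hasFDerivAt_norm_of_ne_zero (hx : x ≠ 0) :
    HasFDerivAt (fun y : F => ‖y‖) (‖x‖⁻¹ • innerSL ℝ x) x := by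
  have h := (Real.hasDerivAt_sqrt (by positivity : ‖x‖ ^ 2 ≠ 0)).comp_hasFDerivAt x
    (hasStrictFDerivAt_norm_sq x).hasFDerivAt
  simp only [Function.comp_def, Real.sqrt_sq (norm_nonneg _)] at h
  refine h.congr_fderiv ?_
  ext v
  simp only [smul_apply, coe_innerSL_apply, nsmul_eq_mul, Nat.cast_ofNat, smul_eq_mul]
  field_simp

theorem hasFDerivAt_inv_norm (hx : x ≠ 0) :
    HasFDerivAt (fun y : F => ‖y‖⁻¹) (-(‖x‖⁻¹ ^ 3) • innerSL ℝ x) x := by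
  have hx' : ‖x‖ ≠ 0 := norm_ne_zero_iff.mpr hx
  refine ((hasDerivAt_inv hx').comp_hasFDerivAt x (hasFDerivAt_norm_of_ne_zero hx)).congr_fderiv ?_
  rw [smul_smul]
  congr 1
  field_simp
end

theorem pd_eq_of_hasFDerivAt {f : E3 → ℝ} {f' : E3 →L[ℝ] ℝ} {x : E3} (hf : HasFDerivAt f f' x)
    (m : Fin 3) : pd m f x = f' (EuclideanSpace.single m 1) := by
  rw [pd, hf.fderiv]

theorem pd_congr_of_eventuallyEq {f g : E3 → ℝ} {x : E3} (h : f =ᶠ[𝓝 x] g) (m : Fin 3) :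
    pd m f x = pd m g x := by
  rw [pd, pd, h.fderiv_eq]

theorem hasFDerivAt_coord (l : Fin 3) (x : E3) :
    HasFDerivAt (fun y : E3 => y l) (EuclideanSpace.proj l : E3 →L[ℝ] ℝ) x :=
  (EuclideanSpace.proj l : E3 →L[ℝ] ℝ).hasFDerivAt

theorem Mmat_eq_inv_norm (j k : Fin 3) :
    Mmat j k = fun y => (16 * Real.pi)⁻¹ *
      (y j * y k * ‖y‖⁻¹ ^ 3 + 3 * (if j = k then 1 else 0) * ‖y‖⁻¹) := by
  funext y
  rw [Mmat]
  ring

theorem pd_Mmat (j k m : Fin 3) {x : E3} (hx : x ≠ 0) :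
    pd m (Mmat j k) x = (16 * Real.pi)⁻¹ *
      ((if j = m then 1 else 0) * x k * ‖x‖⁻¹ ^ 3 + (if k = m then 1 else 0) * x j * ‖x‖⁻¹ ^ 3
        - 3 * x j * x k * x m * ‖x‖⁻¹ ^ 5 - 3 * (if j = k then 1 else 0) * x m * ‖x‖⁻¹ ^ 3) := by
  have hρ := hasFDerivAt_inv_norm hx
  have h := ((((hasFDerivAt_coord j x).fun_mul (hasFDerivAt_coord k x)).fun_mul (hρ.pow 3)).fun_add
    (hρ.const_mul (3 * (if j = k then (1 : ℝ) else 0)))).const_mul (16 * Real.pi)⁻¹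
  rw [Mmat_eq_inv_norm, pd_eq_of_hasFDerivAt h]
  simp only [add_apply, smul_apply, smul_eq_mul, nsmul_eq_mul, innerSL_apply_apply,
    EuclideanSpace.inner_single_right, EuclideanSpace.coe_proj, PiLp.single_apply, conj_trivial,
    one_mul]
  ring

theorem pd_pd_Mmat (j k m i : Fin 3) {x : E3} (hx : x ≠ 0) :
    pd i (pd m (Mmat j k)) x = (16 * Real.pi)⁻¹ *
      (((if j = m then 1 else 0) * (if k = i then 1 else 0)
          + (if k = m then 1 else 0) * (if j = i then 1 else 0)
          - 3 * (if j = k then 1 else 0) * (if m = i then 1 else 0)) * ‖x‖⁻¹ ^ 3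
        - 3 * ((if j = m then 1 else 0) * x k * x i + (if k = m then 1 else 0) * x j * x i
          + (if j = i then 1 else 0) * x k * x m + (if k = i then 1 else 0) * x j * x m
          + (if m = i then 1 else 0) * x j * x k - 3 * (if j = k then 1 else 0) * x m * x i)
          * ‖x‖⁻¹ ^ 5
        + 15 * x j * x k * x m * x i * ‖x‖⁻¹ ^ 7) := by
  have hρ := hasFDerivAt_inv_norm hx
  have hc := fun l => hasFDerivAt_coord l x
  have h := ((((((hc k).const_mul (if j = m then (1 : ℝ) else 0)).fun_mul (hρ.pow 3)).fun_add
    (((hc j).const_mul (if k = m then (1 : ℝ) else 0)).fun_mul (hρ.pow 3))).fun_sub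
    (((((hc j).const_mul 3).fun_mul (hc k)).fun_mul (hc m)).fun_mul (hρ.pow 5))).fun_sub
    (((hc m).const_mul (3 * if j = k then (1 : ℝ) else 0)).fun_mul (hρ.pow 3))).const_mul
    (16 * Real.pi)⁻¹
  have hnear : pd m (Mmat j k) =ᶠ[𝓝 x] fun y => (16 * Real.pi)⁻¹ *
      ((if j = m then 1 else 0) * y k * ‖y‖⁻¹ ^ 3 + (if k = m then 1 else 0) * y j * ‖y‖⁻¹ ^ 3
        - 3 * y j * y k * y m * ‖y‖⁻¹ ^ 5 - 3 * (if j = k then 1 else 0) * y m * ‖y‖⁻¹ ^ 3) := by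
    filter_upwards [isOpen_ne.mem_nhds hx] with y hy using pd_Mmat j k m hy
  rw [pd_congr_of_eventuallyEq hnear, pd_eq_of_hasFDerivAt h]
  simp only [add_apply, smul_apply, sub_apply, smul_eq_mul, nsmul_eq_mul, innerSL_apply_apply,
    EuclideanSpace.inner_single_right, EuclideanSpace.coe_proj, PiLp.single_apply, conj_trivial,
    one_mul]
  ring

theorem inv_norm_sq_mul_sum_sq {x : E3} (hx : x ≠ 0) : ‖x‖⁻¹ ^ 2 * ∑ l, x l ^ 2 = 1 := by
  rw [← EuclideanSpace.real_norm_sq_eq, inv_pow, inv_mul_cancel₀ (by positivity)]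

theorem lap_Mmat (k i : Fin 3) {x : E3} (hx : x ≠ 0) :
    lap (Mmat k i) x = -(8 * Real.pi)⁻¹ *
      (3 * x k * x i * ‖x‖⁻¹ ^ 5 - (if k = i then 1 else 0) * ‖x‖⁻¹ ^ 3) := by
  rw [lap, Finset.sum_congr rfl fun m _ => pd_pd_Mmat k i m m hx]
  -- the coefficient collects the contracted terms in which `∑ l, x l ^ 2` appears
  linear_combination (norm := skip) (16 * Real.pi)⁻¹ *
    (15 * x k * x i * ‖x‖⁻¹ ^ 5 + 9 * (if k = i then 1 else 0) * ‖x‖⁻¹ ^ 3) *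
    inv_norm_sq_mul_sum_sq hx
  simp only [Fin.sum_univ_three]
  fin_cases k <;> fin_cases i <;> simp only [Fin.reduceFinMk, Fin.reduceEq, ↓reduceIte] <;> ring

theorem sum_pd_pd_Mmat (i k : Fin 3) {x : E3} (hx : x ≠ 0) :
    ∑ j, pd i (pd j (Mmat j k)) x = (8 * Real.pi)⁻¹ *
      (3 * x k * x i * ‖x‖⁻¹ ^ 5 - (if k = i then 1 else 0) * ‖x‖⁻¹ ^ 3) := by
  rw [Finset.sum_congr rfl fun j _ => pd_pd_Mmat j k j i hx]
  linear_combination (norm := skip) (16 * Real.pi)⁻¹ *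
    (15 * x k * x i * ‖x‖⁻¹ ^ 5 - 3 * (if k = i then 1 else 0) * ‖x‖⁻¹ ^ 3) *
    inv_norm_sq_mul_sum_sq hx
  simp only [Fin.sum_univ_three]
  fin_cases k <;> fin_cases i <;> simp only [Fin.reduceFinMk, Fin.reduceEq, ↓reduceIte] <;> ring

/-- on ℝ³ \ {0}, `Δ M_{ki} + ∑_j ∂_i∂_j M_{jk} = 0`. -/
theorem stmt1 (i k : Fin 3) (x : E3) (hx : x ≠ 0) :
    lap (Mmat k i) x + ∑ j : Fin 3, pd i (pd j (Mmat j k)) x = 0 := by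
  rw [lap_Mmat k i hx, sum_pd_pd_Mmat i k hx]
  ring
end
end

section
/- For any exponent a > 0 there is a constant C(a) such that for all smooth compactly supported w : ℝ³ → ℝ, the weighted Poincaré inequality ∫_{ℝ³} w² r^{-3+2a} dx ≤ C(a) ∫_{ℝ³} |∇w|² r^{-3+2(a+1)} dx holds, where r(x) = max(|x|, c₀) for some fixed c₀ > 0 (any radius function ≥ c₀ coinciding with |x| outside the unit ball). -/
open MeasureTheory Filter
open scoped BigOperators Topology RealInnerProductSpace

noncomputable section

section helpers

lemma wcmp1 {m ρ q : ℝ} (hm : 0 < m) (h1 : m^2 ≤ ρ) (h2 : ρ ≤ 2*m^2) :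
    (m^2) ^ q ≤ max 1 ((2:ℝ)^(-q)) * ρ ^ q := by
  have hm2 : (0:ℝ) < m^2 := by positivity
  have hρ : (0:ℝ) < ρ := lt_of_lt_of_le hm2 h1
  rcases le_or_gt 0 q with hq | hq
  · calc (m^2) ^ q ≤ ρ ^ q := Real.rpow_le_rpow hm2.le h1 hq
      _ ≤ max 1 ((2:ℝ)^(-q)) * ρ ^ q := by
          nlinarith [Real.rpow_nonneg hρ.le q, le_max_left (1:ℝ) ((2:ℝ)^(-q))]
  · have hρ2 : (0:ℝ) < ρ/2 := by linarith
    have h3 : ρ/2 ≤ m^2 := by linarith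
    calc (m^2) ^ q ≤ (ρ/2) ^ q := Real.rpow_le_rpow_of_nonpos hρ2 h3 hq.le
      _ = (2:ℝ)^(-q) * ρ ^ q := by
          rw [Real.rpow_neg (by norm_num), Real.div_rpow hρ.le (by norm_num)]
          ring
      _ ≤ max 1 ((2:ℝ)^(-q)) * ρ ^ q :=
          mul_le_mul_of_nonneg_right (le_max_right _ _) (Real.rpow_nonneg hρ.le q)

lemma wcmp2 {m ρ q : ℝ} (hm : 0 < m) (h1 : m^2 ≤ ρ) (h2 : ρ ≤ 2*m^2) :
    ρ ^ q ≤ max 1 ((2:ℝ)^q) * (m^2) ^ q := by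
  have hm2 : (0:ℝ) < m^2 := by positivity
  have hρ : (0:ℝ) < ρ := lt_of_lt_of_le hm2 h1
  rcases le_or_gt 0 q with hq | hq
  · calc ρ ^ q ≤ (2*m^2) ^ q := Real.rpow_le_rpow hρ.le h2 hq
      _ = (2:ℝ)^q * (m^2)^q := Real.mul_rpow (by norm_num) hm2.le
      _ ≤ max 1 ((2:ℝ)^q) * (m^2) ^ q :=
          mul_le_mul_of_nonneg_right (le_max_right _ _) (Real.rpow_nonneg hm2.le q)
  · calc ρ ^ q ≤ (m^2) ^ q := Real.rpow_le_rpow_of_nonpos hm2 h1 hq.le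
      _ ≤ max 1 ((2:ℝ)^q) * (m^2) ^ q := by
          nlinarith [Real.rpow_nonneg hm2.le q, le_max_left (1:ℝ) ((2:ℝ)^q)]

lemma sum_coord_sq (x : E3) : ∑ i : Fin 3, (x i)^2 = ‖x‖^2 := by
  rw [EuclideanSpace.norm_eq, Real.sq_sqrt (by positivity)]
  simp [sq_abs]

lemma sum_single_smul (x : E3) :
    ∑ i : Fin 3, (x i) • EuclideanSpace.single i (1:ℝ) = x := by
  simpa [EuclideanSpace.basisFun_repr, EuclideanSpace.basisFun_apply] using
    (EuclideanSpace.basisFun (Fin 3) ℝ).sum_repr x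

lemma clm_sum_repr (L : E3 →L[ℝ] ℝ) (x : E3) :
    ∑ i : Fin 3, (x i) * L (EuclideanSpace.single i 1) = L x := by
  calc ∑ i : Fin 3, (x i) * L (EuclideanSpace.single i 1)
      = ∑ i : Fin 3, L ((x i) • EuclideanSpace.single i 1) := by
        simp [smul_eq_mul]
    _ = L (∑ i : Fin 3, (x i) • EuclideanSpace.single i 1) := (map_sum L _ _).symm
    _ = L x := by rw [sum_single_smul]

lemma pt1 {δ aa u n2 c2 W pp : ℝ} (hp : pp = aa - 3/2) (hu : 0 ≤ u) (hW : 0 ≤ W)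
    (hn2 : 0 ≤ n2) (hc2 : 0 ≤ c2)
    (h1 : δ ≤ 2*aa) (h2 : δ ≤ 3) :
    δ*(W*(u*(n2+c2))) ≤ W*(3*(u*(n2+c2)) + 2*pp*u*n2) := by
  subst hp
  nlinarith [mul_nonneg (mul_nonneg hW hu) (mul_nonneg (sub_nonneg.2 h1) hn2),
    mul_nonneg (mul_nonneg hW hu) (mul_nonneg (sub_nonneg.2 h2) hc2)]

lemma pt2 {δ W D B n t ρ : ℝ} (hδ : 0 < δ) (ht : 0 ≤ t)
    (hD : |D| ≤ B * n) (hn2 : n^2 ≤ ρ) :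
    -(2*W*D*t) ≤ δ/2*(W^2*t) + 2/δ*(B^2*(t*ρ)) := by
  set A := |W| with hA
  have hA2 : A^2 = W^2 := sq_abs W
  have hAn : 0 ≤ A := abs_nonneg W
  have h0 : -(W*D) ≤ A * (B*n) := by
    calc -(W*D) ≤ |W*D| := neg_le_abs _
      _ = A * |D| := abs_mul W D
      _ ≤ A * (B*n) := mul_le_mul_of_nonneg_left hD hAn
  have h1 : -(2*W*D*t) ≤ 2*A*(B*n)*t := by nlinarith [mul_le_mul_of_nonneg_right h0 ht]
  have key : δ/2*(W^2*t) + 2/δ*(B^2*(t*ρ)) - 2*A*(B*n)*t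
      = ((δ*A-2*B*n)^2*t + 4*B^2*(ρ-n^2)*t)/(2*δ) := by
    rw [← hA2]; field_simp; ring
  have pos1 : 0 ≤ (δ*A-2*B*n)^2*t := mul_nonneg (sq_nonneg _) ht
  have pos2 : 0 ≤ 4*B^2*(ρ-n^2)*t :=
    mul_nonneg (mul_nonneg (by positivity) (by linarith)) ht
  have hfin : 0 ≤ δ/2*(W^2*t) + 2/δ*(B^2*(t*ρ)) - 2*A*(B*n)*t := by
    rw [key]; exact div_nonneg (by linarith) (by linarith)
  linarith

end helpers

set_option maxHeartbeats 2000000 in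
/-- weighted Poincaré inequality. For any `a > 0` there is `C(a)` such that
for every `c₀ > 0` (radius function `r(x) = max(|x|, c₀)`) and every smooth compactly
supported `w`, `∫ w² r^{-3+2a} ≤ C(a) ∫ |∇w|² r^{-3+2(a+1)}`. -/
theorem stmt8 (a : ℝ) (ha : 0 < a) :
    ∃ C : ℝ, ∀ c₀ : ℝ, 0 < c₀ → ∀ w : E3 → ℝ, ContDiff ℝ (⊤ : ℕ∞) w → HasCompactSupport w →
      (∫ x : E3, (w x) ^ 2 * (max ‖x‖ c₀) ^ (-3 + 2 * a))
        ≤ C * ∫ x : E3, ‖fderiv ℝ w x‖ ^ 2 * (max ‖x‖ c₀) ^ (-3 + 2 * (a + 1)) := by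
  set p : ℝ := a - 3/2 with hpdef
  set δ : ℝ := min (2*a) 3 with hδdef
  have hδ : 0 < δ := lt_min (by linarith) (by norm_num)
  have hδa : δ ≤ 2*a := min_le_left _ _
  have hδ3 : δ ≤ 3 := min_le_right _ _
  set K₁ : ℝ := max 1 ((2:ℝ)^(-p)) with hK₁def
  set K₂ : ℝ := max 1 ((2:ℝ)^(p+1)) with hK₂def
  have hK₁ : 0 < K₁ := lt_of_lt_of_le one_pos (le_max_left _ _)
  have hK₂ : 0 < K₂ := lt_of_lt_of_le one_pos (le_max_left _ _)
  refine ⟨K₁ * K₂ * 4 / δ^2, ?_⟩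
  intro c₀ hc₀ w hw hcw
  set Dw : E3 → (E3 →L[ℝ] ℝ) := fderiv ℝ w with hDwdef
  set ρ : E3 → ℝ := fun x => ‖x‖^2 + c₀^2 with hρdef
  have hρpos : ∀ x, 0 < ρ x := fun x => by positivity
  set φ : E3 → ℝ := fun x => ρ x ^ p with hφdef
  set m : E3 → ℝ := fun x => max ‖x‖ c₀ with hmdef
  have hmpos : ∀ x, 0 < m x := fun x => lt_of_lt_of_le hc₀ (le_max_right _ _)
  have hm1 : ∀ x, (m x)^2 ≤ ρ x := by
    intro x
    show (max ‖x‖ c₀)^2 ≤ ‖x‖^2 + c₀^2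
    rcases max_cases ‖x‖ c₀ with ⟨h,_⟩|⟨h,_⟩ <;> rw [h] <;>
      nlinarith [norm_nonneg x, hc₀]
  have hm2 : ∀ x, ρ x ≤ 2*(m x)^2 := by
    intro x
    show ‖x‖^2 + c₀^2 ≤ 2*(max ‖x‖ c₀)^2
    have h1 : ‖x‖ ≤ max ‖x‖ c₀ := le_max_left _ _
    have h2 : c₀ ≤ max ‖x‖ c₀ := le_max_right _ _
    nlinarith [norm_nonneg x, hc₀]
  -- continuity
  have hwc : Continuous w := hw.continuous
  have hDwc : Continuous Dw := hw.continuous_fderiv (by simp)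
  have hρc : Continuous ρ := (continuous_norm.pow 2).add continuous_const
  have hφc : Continuous φ := hρc.rpow_const (fun x => Or.inl (hρpos x).ne')
  have hρc' : Continuous (fun x => ρ x ^ (p-1)) :=
    hρc.rpow_const (fun x => Or.inl (hρpos x).ne')
  have hρc'' : Continuous (fun x => ρ x ^ (p+1)) :=
    hρc.rpow_const (fun x => Or.inl (hρpos x).ne')
  have hmc : Continuous m := continuous_norm.max continuous_const
  have hcoord : ∀ i : Fin 3, Continuous (fun x : E3 => x i) :=
    fun i => (EuclideanSpace.proj (𝕜 := ℝ) i).continuous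
  have hDwa : ∀ v : E3, Continuous (fun x => Dw x v) :=
    fun v => hDwc.clm_apply continuous_const
  have hDwx : Continuous (fun x => Dw x x) := hDwc.clm_apply continuous_id
  have hnrm : Continuous (fun x : E3 => ‖Dw x‖) := hDwc.norm
  -- support
  set K : Set E3 := tsupport w with hKdef
  have hKcomp : IsCompact K := hcw
  have hw0 : ∀ x ∉ K, w x = 0 := fun x hx => image_eq_zero_of_notMem_tsupport hx
  have hDw0 : ∀ x ∉ K, Dw x = 0 := fun x hx => by
    by_contra h
    exact hx (support_fderiv_subset (𝕜 := ℝ) (f := w) h)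
  have intgr : ∀ u : E3 → ℝ, Continuous u → (∀ x ∉ K, u x = 0) → Integrable u :=
    fun u hu h0 => hu.integrable_of_hasCompactSupport (HasCompactSupport.intro hKcomp h0)
  -- derivatives
  have hwd : ∀ x, HasFDerivAt w (Dw x) x := fun x =>
    (hw.differentiable (by simp) x).hasFDerivAt
  have hw2d : ∀ x, HasFDerivAt (fun y => (w y)^2) ((2 * w x) • Dw x) x := by
    intro x
    have h := (hwd x).mul (hwd x)
    have e : w x • Dw x + w x • Dw x = (2 * w x) • Dw x := by rw [two_mul, add_smul]
    rw [e] at h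
    have hf : (fun y => (w y)^2) = w * w := by funext y; simp [sq]
    rw [hf]; exact h
  have hρd : ∀ x, HasFDerivAt ρ ((2:ℕ) • (innerSL ℝ x)) x := fun x =>
    ((hasStrictFDerivAt_norm_sq x).hasFDerivAt).add_const (c₀^2)
  have hφd : ∀ x, HasFDerivAt φ ((p * ρ x ^ (p-1)) • ((2:ℕ) • (innerSL ℝ x))) x :=
    fun x => (hρd x).rpow_const (Or.inl (hρpos x).ne')
  have hVd : ∀ (i : Fin 3) x, HasFDerivAt (fun y => φ y * y i)
      (φ x • (EuclideanSpace.proj (𝕜 := ℝ) i) +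
        (x i) • ((p * ρ x ^ (p-1)) • ((2:ℕ) • (innerSL ℝ x)))) x :=
    fun i x => (hφd x).mul (EuclideanSpace.proj (𝕜 := ℝ) i).hasFDerivAt
  -- applied derivative formulas
  have happ : ∀ (i : Fin 3) (x : E3),
      (φ x • (EuclideanSpace.proj (𝕜 := ℝ) i) +
        (x i) • ((p * ρ x ^ (p-1)) • ((2:ℕ) • (innerSL ℝ x)))) (EuclideanSpace.single i (1:ℝ))
      = φ x + 2*p*ρ x ^ (p-1)*(x i)^2 := by
    intro i x
    simp [EuclideanSpace.inner_single_right, real_inner_comm, smul_eq_mul]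
    ring
  have hfapp : ∀ (i : Fin 3) (x : E3),
      ((2 * w x) • Dw x) (EuclideanSpace.single i (1:ℝ))
        = 2 * w x * Dw x (EuclideanSpace.single i 1) := by
    intro i x; simp [smul_eq_mul]
  -- integrable families
  have intA : ∀ i : Fin 3,
      Integrable (fun x => (w x)^2 * (φ x + 2*p*ρ x ^ (p-1)*(x i)^2)) := by
    intro i
    refine intgr _ (((hwc.pow 2).mul (hφc.add ((continuous_const.mul hρc').mul
      ((hcoord i).pow 2))))) ?_
    intro x hx; simp [hw0 x hx]
  have intB : ∀ i : Fin 3,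
      Integrable (fun x => (2*w x*Dw x (EuclideanSpace.single i 1))*(φ x * x i)) := by
    intro i
    refine intgr _ (((continuous_const.mul hwc).mul (hDwa _)).mul
      (hφc.mul (hcoord i))) ?_
    intro x hx; simp [hw0 x hx]
  have intC : ∀ i : Fin 3,
      Integrable (fun x => (w x)^2 * (φ x * x i)) := by
    intro i
    refine intgr _ ((hwc.pow 2).mul (hφc.mul (hcoord i))) ?_
    intro x hx; simp [hw0 x hx]
  -- integration by parts
  have ibp : ∀ i : Fin 3,
      ∫ x : E3, (w x)^2 * (φ x + 2*p*ρ x ^ (p-1)*(x i)^2)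
        = - ∫ x : E3, (2*w x*Dw x (EuclideanSpace.single i 1))*(φ x * x i) := by
    intro i
    have h := integral_bilinear_hasFDerivAt_right_eq_neg_left_of_integrable
      (μ := (volume : Measure E3)) (B := ContinuousLinearMap.mul ℝ ℝ)
      (f := fun x => (w x)^2) (f' := fun x => (2 * w x) • Dw x)
      (g := fun x => φ x * x i)
      (g' := fun x => φ x • (EuclideanSpace.proj (𝕜 := ℝ) i) +
        (x i) • ((p * ρ x ^ (p-1)) • ((2:ℕ) • (innerSL ℝ x))))
      (v := EuclideanSpace.single i (1:ℝ))
      ?_ ?_ ?_ (fun x _ => hw2d x) (fun x _ => hVd i x)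
    · simpa only [ContinuousLinearMap.mul_apply', happ, hfapp] using h
    · simpa only [ContinuousLinearMap.mul_apply', hfapp] using intB i
    · simpa only [ContinuousLinearMap.mul_apply', happ] using intA i
    · simpa only [ContinuousLinearMap.mul_apply'] using intC i
  -- summed divergence identity
  have hpt : ∀ x : E3, ((w x)^2 * (φ x + 2*p*ρ x ^ (p-1)*(x 0)^2)
        + (2*w x*Dw x (EuclideanSpace.single 0 1))*(φ x * x 0))
      + ((w x)^2 * (φ x + 2*p*ρ x ^ (p-1)*(x 1)^2)
        + (2*w x*Dw x (EuclideanSpace.single 1 1))*(φ x * x 1))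
      + ((w x)^2 * (φ x + 2*p*ρ x ^ (p-1)*(x 2)^2)
        + (2*w x*Dw x (EuclideanSpace.single 2 1))*(φ x * x 2))
      = (w x)^2 * (3*φ x + 2*p*ρ x ^ (p-1)*‖x‖^2) + 2*w x*(Dw x x)*φ x := by
    intro x
    have h1 := sum_coord_sq x
    have h2 := clm_sum_repr (Dw x) x
    rw [Fin.sum_univ_three] at h1 h2
    linear_combination (w x)^2*(2*p*ρ x ^ (p-1)) * h1 + 2*w x*φ x * h2
  have hzero : ∫ x : E3, ((w x)^2 * (3*φ x + 2*p*ρ x ^ (p-1)*‖x‖^2)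
      + 2*w x*(Dw x x)*φ x) = 0 := by
    have hend : ∀ i : Fin 3, ∫ x : E3, ((w x)^2 * (φ x + 2*p*ρ x ^ (p-1)*(x i)^2)
        + (2*w x*Dw x (EuclideanSpace.single i 1))*(φ x * x i)) = 0 := by
      intro i
      rw [integral_add (intA i) (intB i), ibp i, neg_add_cancel]
    have hfe : (fun x : E3 => (w x)^2 * (3*φ x + 2*p*ρ x ^ (p-1)*‖x‖^2)
        + 2*w x*(Dw x x)*φ x)
        = fun x : E3 => (((w x)^2 * (φ x + 2*p*ρ x ^ (p-1)*(x 0)^2)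
            + (2*w x*Dw x (EuclideanSpace.single 0 1))*(φ x * x 0))
          + ((w x)^2 * (φ x + 2*p*ρ x ^ (p-1)*(x 1)^2)
            + (2*w x*Dw x (EuclideanSpace.single 1 1))*(φ x * x 1)))
          + ((w x)^2 * (φ x + 2*p*ρ x ^ (p-1)*(x 2)^2)
            + (2*w x*Dw x (EuclideanSpace.single 2 1))*(φ x * x 2)) :=
      funext fun x => (hpt x).symm
    have intAB : ∀ i : Fin 3, Integrable (fun x : E3 => (w x)^2 * (φ x + 2*p*ρ x ^ (p-1)*(x i)^2)
        + (2*w x*Dw x (EuclideanSpace.single i 1))*(φ x * x i)) :=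
      fun i => (intA i).add (intB i)
    have int01 : Integrable (fun x : E3 => ((w x)^2 * (φ x + 2*p*ρ x ^ (p-1)*(x 0)^2)
        + (2*w x*Dw x (EuclideanSpace.single 0 1))*(φ x * x 0))
      + ((w x)^2 * (φ x + 2*p*ρ x ^ (p-1)*(x 1)^2)
        + (2*w x*Dw x (EuclideanSpace.single 1 1))*(φ x * x 1))) :=
      (intAB 0).add (intAB 1)
    rw [hfe, integral_add int01 (intAB 2), integral_add (intAB 0) (intAB 1),
      hend 0, hend 1, hend 2]
    norm_num
  -- main quantities
  set X := ∫ x : E3, (w x)^2 * ρ x ^ p with hX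
  set Y := ∫ x : E3, ‖Dw x‖^2 * ρ x ^ (p+1) with hY
  have intX : Integrable (fun x : E3 => (w x)^2 * ρ x ^ p) := by
    refine intgr _ ((hwc.pow 2).mul hφc) ?_
    intro x hx; simp [hw0 x hx]
  have intY : Integrable (fun x : E3 => ‖Dw x‖^2 * ρ x ^ (p+1)) := by
    refine intgr _ ((hnrm.pow 2).mul hρc'') ?_
    intro x hx; simp [hDw0 x hx]
  have intG : Integrable (fun x : E3 => (w x)^2 * (3*φ x + 2*p*ρ x ^ (p-1)*‖x‖^2)) := by
    refine intgr _ ((hwc.pow 2).mul ((continuous_const.mul hφc).add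
      ((continuous_const.mul hρc').mul (continuous_norm.pow 2)))) ?_
    intro x hx; simp [hw0 x hx]
  have intH : Integrable (fun x : E3 => 2*w x*(Dw x x)*φ x) := by
    refine intgr _ (((continuous_const.mul hwc).mul hDwx).mul hφc) ?_
    intro x hx; simp [hw0 x hx]
  -- step 1 : δ X ≤ ∫ w² div V
  have hs1 : δ * X ≤ ∫ x : E3, (w x)^2 * (3*φ x + 2*p*ρ x ^ (p-1)*‖x‖^2) := by
    rw [hX, ← integral_const_mul]
    refine integral_mono (intX.const_mul δ) intG (fun x => ?_)
    have hu : (0:ℝ) ≤ ρ x ^ (p-1) := Real.rpow_nonneg (hρpos x).le _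
    show δ * ((w x)^2 * ρ x ^ p) ≤ (w x)^2 * (3*φ x + 2*p*ρ x ^ (p-1)*‖x‖^2)
    have hφx : φ x = ρ x ^ p := rfl
    have hρp : ρ x ^ p = ρ x ^ (p-1) * ρ x := by
      rw [← Real.rpow_add_one (hρpos x).ne' (p-1)]; norm_num
    rw [hφx, hρp]
    have hρx : ρ x = ‖x‖^2 + c₀^2 := rfl
    rw [hρx]
    exact pt1 hpdef hu (sq_nonneg _) (sq_nonneg _) (sq_nonneg _) hδa hδ3
  -- step 2 : equality from hzero
  have hs2 : ∫ x : E3, (w x)^2 * (3*φ x + 2*p*ρ x ^ (p-1)*‖x‖^2)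
      = - ∫ x : E3, 2*w x*(Dw x x)*φ x := by
    have h := hzero
    rw [integral_add intG intH] at h
    linarith
  -- step 3 : Cauchy-Schwarz / AM-GM bound
  have int2 : Integrable (fun x : E3 => ‖Dw x‖^2*(ρ x ^ p * ρ x)) := by
    refine intgr _ ((hnrm.pow 2).mul (hφc.mul hρc)) ?_
    intro x hx; simp [hDw0 x hx]
  have hs3 : - ∫ x : E3, 2*w x*(Dw x x)*φ x ≤ δ/2 * X + 2/δ * Y := by
    rw [← integral_neg]
    have hmono : ∫ x : E3, -(2*w x*(Dw x x)*φ x)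
        ≤ ∫ x : E3, (δ/2*((w x)^2*ρ x ^ p) + 2/δ*(‖Dw x‖^2*(ρ x ^ p * ρ x))) := by
      refine integral_mono intH.neg ((intX.const_mul _).add (int2.const_mul _)) (fun x => ?_)
      refine pt2 (n := ‖x‖) hδ (Real.rpow_nonneg (hρpos x).le p) ?_ ?_
      · calc |Dw x x| = ‖Dw x x‖ := (Real.norm_eq_abs _).symm
          _ ≤ ‖Dw x‖ * ‖x‖ := (Dw x).le_opNorm x
      · show ‖x‖^2 ≤ ρ x
        have : ρ x = ‖x‖^2 + c₀^2 := rfl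
        nlinarith [sq_nonneg c₀]
    have heval : ∫ x : E3, (δ/2*((w x)^2*ρ x ^ p) + 2/δ*(‖Dw x‖^2*(ρ x ^ p * ρ x)))
        = δ/2 * X + 2/δ * Y := by
      have hfun : (fun x : E3 => ‖Dw x‖^2*(ρ x ^ p * ρ x))
          = fun x : E3 => ‖Dw x‖^2 * ρ x ^ (p+1) := by
        funext x
        rw [Real.rpow_add_one (hρpos x).ne' p]
      rw [integral_add (intX.const_mul _) (int2.const_mul _), integral_const_mul,
        integral_const_mul, hX, hY, hfun]
    rw [heval] at hmono
    exact hmono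
  -- combine to X ≤ 4/δ² Y
  have hXY : X ≤ 4/δ^2 * Y := by
    have hch : δ * X ≤ δ/2 * X + 2/δ * Y := le_trans hs1 (hs2 ▸ hs3)
    have h2 : δ/2 * X ≤ 2/δ * Y := by linarith
    have h3 := mul_le_mul_of_nonneg_left h2 (le_of_lt (show (0:ℝ) < 2/δ by positivity))
    calc X = 2/δ*(δ/2*X) := by field_simp
      _ ≤ 2/δ*(2/δ*Y) := h3
      _ = 4/δ^2*Y := by field_simp; ring
  -- weight comparisons and final chain
  have hmpos : ∀ x : E3, 0 < max ‖x‖ c₀ := fun x => lt_of_lt_of_le hc₀ (le_max_right _ _)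
  have hrw1 : ∀ x : E3, (max ‖x‖ c₀) ^ (-3 + 2*a) = ((max ‖x‖ c₀)^2) ^ p := by
    intro x
    rw [← Real.rpow_natCast (max ‖x‖ c₀) 2, ← Real.rpow_mul (hmpos x).le]
    congr 1
    push_cast
    rw [hpdef]; ring
  have hrw2 : ∀ x : E3, (max ‖x‖ c₀) ^ (-3 + 2*(a+1)) = ((max ‖x‖ c₀)^2) ^ (p+1) := by
    intro x
    rw [← Real.rpow_natCast (max ‖x‖ c₀) 2, ← Real.rpow_mul (hmpos x).le]
    congr 1
    push_cast
    rw [hpdef]; ring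
  have hL : (∫ x : E3, (w x) ^ 2 * (max ‖x‖ c₀) ^ (-3 + 2 * a))
      = ∫ x : E3, (w x)^2 * ((max ‖x‖ c₀)^2) ^ p := by
    congr 1; funext x; rw [hrw1 x]
  have hR : (∫ x : E3, ‖Dw x‖ ^ 2 * (max ‖x‖ c₀) ^ (-3 + 2 * (a + 1)))
      = ∫ x : E3, ‖Dw x‖^2 * ((max ‖x‖ c₀)^2) ^ (p+1) := by
    congr 1; funext x; rw [hrw2 x]
  rw [hL, hR]
  set R := ∫ x : E3, ‖Dw x‖^2 * ((max ‖x‖ c₀)^2) ^ (p+1) with hRdef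
  have intL : Integrable (fun x : E3 => (w x)^2 * ((max ‖x‖ c₀)^2) ^ p) := by
    refine intgr _ ((hwc.pow 2).mul
      (((continuous_norm.max continuous_const).pow 2).rpow_const
        (fun x => Or.inl (pow_ne_zero 2 (hmpos x).ne')))) ?_
    intro x hx; simp [hw0 x hx]
  have intR : Integrable (fun x : E3 => ‖Dw x‖^2 * ((max ‖x‖ c₀)^2) ^ (p+1)) := by
    refine intgr _ ((hnrm.pow 2).mul
      (((continuous_norm.max continuous_const).pow 2).rpow_const
        (fun x => Or.inl (pow_ne_zero 2 (hmpos x).ne')))) ?_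
    intro x hx; simp [hDw0 x hx]
  have hstep1 : ∫ x : E3, (w x)^2 * ((max ‖x‖ c₀)^2) ^ p ≤ K₁ * X := by
    rw [hX, ← integral_const_mul]
    refine integral_mono intL (intX.const_mul K₁) (fun x => ?_)
    have h := wcmp1 (q := p) (hmpos x) (hm1 x) (hm2 x)
    rw [← hK₁def] at h
    calc (w x)^2 * ((max ‖x‖ c₀)^2) ^ p ≤ (w x)^2 * (K₁ * ρ x ^ p) :=
          mul_le_mul_of_nonneg_left h (sq_nonneg _)
      _ = K₁ * ((w x)^2 * ρ x ^ p) := by ring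
  have hstep2 : Y ≤ K₂ * R := by
    rw [hY, hRdef, ← integral_const_mul]
    refine integral_mono intY (intR.const_mul K₂) (fun x => ?_)
    have h := wcmp2 (q := p+1) (hmpos x) (hm1 x) (hm2 x)
    rw [← hK₂def] at h
    calc ‖Dw x‖^2 * ρ x ^ (p+1) ≤ ‖Dw x‖^2 * (K₂ * ((max ‖x‖ c₀)^2) ^ (p+1)) :=
          mul_le_mul_of_nonneg_left h (sq_nonneg _)
      _ = K₂ * (‖Dw x‖^2 * ((max ‖x‖ c₀)^2) ^ (p+1)) := by ring
  have hRnn : 0 ≤ R := integral_nonneg fun x =>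
    mul_nonneg (sq_nonneg _) (Real.rpow_nonneg (sq_nonneg _) _)
  calc ∫ x : E3, (w x)^2 * ((max ‖x‖ c₀)^2) ^ p ≤ K₁ * X := hstep1
    _ ≤ K₁ * (4/δ^2 * Y) := mul_le_mul_of_nonneg_left hXY hK₁.le
    _ ≤ K₁ * (4/δ^2 * (K₂ * R)) := mul_le_mul_of_nonneg_left
        (mul_le_mul_of_nonneg_left hstep2 (by positivity)) hK₁.le
    _ = K₁ * K₂ * 4 / δ^2 * R := by
        field_simp
end
end

section
/- Let θ ∈ (0,2) and let w : ℝ³ → ℝ be a C² function such that f := -Δw + (2/r²) w satisfies |f(x)| ≤ K r(x)^{-θ-2} for all x, and w(x) → 0 as |x| → ∞. Then |w(x)| ≤ C K r(x)^{-θ} for all x, where C depends only on θ. -/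
/-!
The function `φ(x) = (1 + |x|²)^(-θ/2)` is a barrier: a direct computation gives
`(-Δ + 2/r²) φ ≥ 2^(-θ/2-1) (2 - θ)(1 + θ) r^(-θ-2)`, positive exactly because `θ < 2`.
Hence for a suitable `C`, both `C K φ + w` and `C K φ - w` are supersolutions of `-Δ + 2/r²`
vanishing at infinity. Such a function cannot be negative: it would attain a negative global
minimum, where `Δ ≥ 0` and the potential term is negative. So `|w| ≤ C K φ ≤ C K r^(-θ)`.
-/

open MeasureTheory Filter
open scoped BigOperators Topology RealInnerProductSpace

noncomputable section

section Laplacian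

variable {f g : E3 → ℝ}

lemma differentiable_pd (hf : ContDiff ℝ 2 f) (i : Fin 3) : Differentiable ℝ (pd i f) :=
  ((hf.fderiv_right (by norm_num)).clm_apply contDiff_const).differentiable one_ne_zero

lemma pd_add (hf : Differentiable ℝ f) (hg : Differentiable ℝ g) (i : Fin 3) :
    pd i (f + g) = pd i f + pd i g := by
  ext x
  simp [pd, fderiv_add (hf x) (hg x)]

lemma pd_const_smul (c : ℝ) (i : Fin 3) : pd i (c • f) = c • pd i f := by
  ext x
  simp [pd, fderiv_const_smul_field]

lemma lap_add (hf : ContDiff ℝ 2 f) (hg : ContDiff ℝ 2 g) : lap (f + g) = lap f + lap g := by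
  have hf1 := hf.differentiable two_ne_zero
  have hg1 := hg.differentiable two_ne_zero
  ext x
  simp only [lap, pd_add hf1 hg1, pd_add (differentiable_pd hf _) (differentiable_pd hg _),
    Pi.add_apply, Finset.sum_add_distrib]

lemma lap_const_smul (c : ℝ) : lap (c • f) = c • lap f := by
  ext x
  simp [lap, pd_const_smul, Finset.mul_sum]

lemma pd_coord_mul {x : E3} (hf : DifferentiableAt ℝ f x) (c : ℝ) (i : Fin 3) :
    pd i (fun y => c * y i * f y) x = c * f x + c * x i * pd i f x := by
  have hc : HasFDerivAt (fun y : E3 => c * y i) (c • EuclideanSpace.proj (𝕜 := ℝ) i) x :=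
    (EuclideanSpace.proj (𝕜 := ℝ) i).hasFDerivAt.const_mul c
  rw [pd, (hc.fun_mul hf.hasFDerivAt).fderiv, pd]
  simp only [add_apply, smul_apply, smul_eq_mul,
    PiLp.proj_apply, PiLp.single_eq_same, mul_one]
  ring

end Laplacian

lemma second_deriv_nonneg_of_isMinOn {f f' : ℝ → ℝ} {a : ℝ}
    (hf : ∀ t, HasDerivAt f (f' t) t) (hf' : HasDerivAt f' a 0)
    (hmin : IsMinOn f Set.univ 0) : 0 ≤ a := by
  by_contra! ha
  have hf'0 : f' 0 = 0 := (hmin.isLocalMin Filter.univ_mem).hasDerivAt_eq_zero (hf 0)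
  have hslope : ∀ᶠ t in 𝓝[>] (0 : ℝ), f' t / t < 0 := by
    have := (hasDerivAt_iff_tendsto_slope.mp hf').mono_left (nhdsGT_le_nhdsNE 0)
    filter_upwards [this.eventually (eventually_lt_nhds ha)] with t ht
    simpa [slope_def_field, hf'0] using ht
  obtain ⟨δ, hδ, hneg⟩ := (Filter.HasBasis.eventually_iff (nhdsGT_basis 0)).mp hslope
  obtain ⟨t, ht, hft⟩ := exists_hasDerivAt_eq_slope f f' hδ
    (fun t _ => (hf t).continuousAt.continuousWithinAt) fun t _ => hf t
  have hpos : 0 ≤ f' t := by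
    rw [hft]
    exact div_nonneg (sub_nonneg.mpr (hmin (Set.mem_univ δ))) (by linarith)
  exact (hneg ht).not_ge (div_nonneg hpos ht.1.le)

lemma pd_pd_nonneg_of_isMinOn {v : E3 → ℝ} {x : E3} (hv : ContDiff ℝ 2 v)
    (hmin : IsMinOn v Set.univ x) (i : Fin 3) : 0 ≤ pd i (pd i v) x := by
  set e : E3 := EuclideanSpace.single i 1
  have hline : ∀ t : ℝ, HasDerivAt (fun s : ℝ => x + s • e) e t := fun t => by
    simpa using ((hasDerivAt_id t).smul_const e).const_add x
  refine second_deriv_nonneg_of_isMinOn (f := fun t => v (x + t • e))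
    (f' := fun t => pd i v (x + t • e))
    (fun t => ((hv.differentiable two_ne_zero _).hasFDerivAt).comp_hasDerivAt t (hline t)) ?_
    (fun t _ => by simpa using hmin (Set.mem_univ (x + t • e)))
  have := (differentiable_pd hv i (x + (0 : ℝ) • e)).hasFDerivAt.comp_hasDerivAt 0 (hline 0)
  rwa [zero_smul, add_zero] at this

lemma lap_nonneg_of_isMinOn {v : E3 → ℝ} {x : E3} (hv : ContDiff ℝ 2 v)
    (hmin : IsMinOn v Set.univ x) : 0 ≤ lap v x :=
  Finset.sum_nonneg fun i _ => pd_pd_nonneg_of_isMinOn hv hmin i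

lemma exists_isMinOn_of_tendsto_zero {v : E3 → ℝ} {x₀ : E3} (hv : Continuous v)
    (hx₀ : v x₀ < 0) (hv0 : Tendsto v (comap (fun x : E3 => ‖x‖) atTop) (𝓝 0)) :
    ∃ x, IsMinOn v Set.univ x := by
  rw [comap_norm_atTop, Metric.cobounded_eq_cocompact] at hv0
  obtain ⟨x, hx⟩ := hv.exists_forall_le' x₀ ((hv0.eventually (eventually_gt_nhds hx₀)).mono
    fun _ h => h.le)
  exact ⟨x, fun y _ => hx y⟩

def schrodingerOp (q v : E3 → ℝ) (x : E3) : ℝ := -lap v x + q x * v x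

lemma schrodingerOp_add {q u w : E3 → ℝ} (hu : ContDiff ℝ 2 u) (hw : ContDiff ℝ 2 w)
    (x : E3) :
    schrodingerOp q (u + w) x = schrodingerOp q u x + schrodingerOp q w x := by
  simp only [schrodingerOp, lap_add hu hw, Pi.add_apply]
  ring

lemma schrodingerOp_const_smul (q v : E3 → ℝ) (c : ℝ) (x : E3) :
    schrodingerOp q (c • v) x = c * schrodingerOp q v x := by
  simp only [schrodingerOp, lap_const_smul, Pi.smul_apply, smul_eq_mul]
  ring

lemma nonneg_of_schrodingerOp_nonneg {q v : E3 → ℝ} (hq : ∀ x, 0 < q x) (hv : ContDiff ℝ 2 v)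
    (hLv : ∀ x, 0 ≤ schrodingerOp q v x)
    (hv0 : Tendsto v (comap (fun x : E3 => ‖x‖) atTop) (𝓝 0))
    (x : E3) : 0 ≤ v x := by
  by_contra! hx
  obtain ⟨x₁, hmin⟩ := exists_isMinOn_of_tendsto_zero hv.continuous hx hv0
  have hneg : v x₁ < 0 := (hmin (Set.mem_univ x)).trans_lt hx
  have hLv₁ := hLv x₁
  have hlap := lap_nonneg_of_isMinOn hv hmin
  have hqv := mul_neg_of_pos_of_neg (hq x₁) hneg
  rw [schrodingerOp] at hLv₁
  linarith

lemma abs_le_of_abs_schrodingerOp_le {q u w : E3 → ℝ} (hq : ∀ x, 0 < q x)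
    (hu : ContDiff ℝ 2 u) (hw : ContDiff ℝ 2 w)
    (hLw : ∀ x, |schrodingerOp q w x| ≤ schrodingerOp q u x)
    (hu0 : Tendsto u (comap (fun x : E3 => ‖x‖) atTop) (𝓝 0))
    (hw0 : Tendsto w (comap (fun x : E3 => ‖x‖) atTop) (𝓝 0)) (x : E3) : |w x| ≤ u x := by
  have hcomp (b : ℝ) (hb : b = 1 ∨ b = -1) : 0 ≤ u x + b * w x := by
    have hbw : ContDiff ℝ 2 (b • w) := hw.const_smul b
    refine nonneg_of_schrodingerOp_nonneg (v := u + b • w) hq (hu.add hbw) (fun y => ?_) ?_ x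
    · rw [schrodingerOp_add hu hbw, schrodingerOp_const_smul]
      have := abs_le.mp (hLw y)
      rcases hb with rfl | rfl <;> linarith
    · simpa [Pi.add_def] using hu0.add (hw0.const_smul b)
  have h₁ := hcomp 1 (Or.inl rfl)
  have h₂ := hcomp (-1) (Or.inr rfl)
  exact abs_le.mpr ⟨by linarith, by linarith⟩

def weight (p : ℝ) (x : E3) : ℝ := (1 + ‖x‖ ^ 2) ^ p

lemma one_add_norm_sq_pos (x : E3) : 0 < 1 + ‖x‖ ^ 2 := by positivity

lemma contDiff_weight (p : ℝ) {n : WithTop ℕ∞} : ContDiff ℝ n (weight p) :=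
  (contDiff_const.add (contDiff_norm_sq ℝ)).rpow_const_of_ne fun x => (one_add_norm_sq_pos x).ne'

lemma weight_add_one (p : ℝ) (x : E3) :
    weight (p + 1) x = weight p x * (1 + ‖x‖ ^ 2) :=
  Real.rpow_add_one (one_add_norm_sq_pos x).ne' p

lemma weight_sub_one (p : ℝ) (x : E3) :
    weight (p - 1) x = weight p x / (1 + ‖x‖ ^ 2) :=
  Real.rpow_sub_one (one_add_norm_sq_pos x).ne' p

lemma pd_weight (p : ℝ) (i : Fin 3) :
    pd i (weight p) = fun x => 2 * p * x i * weight (p - 1) x := by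
  ext x
  have hd : HasFDerivAt (fun y : E3 => 1 + ‖y‖ ^ 2) (2 • innerSL ℝ x) x :=
    (hasStrictFDerivAt_norm_sq x).hasFDerivAt.const_add 1
  have : HasFDerivAt (weight p) ((p * (1 + ‖x‖ ^ 2) ^ (p - 1)) • 2 • innerSL ℝ x) x :=
    hd.rpow_const (Or.inl (one_add_norm_sq_pos x).ne')
  rw [pd, this.fderiv]
  simp only [smul_apply, coe_innerSL_apply, EuclideanSpace.inner_single_right,
    Real.ringHom_apply, one_mul, nsmul_eq_mul, Nat.cast_ofNat, smul_eq_mul, weight]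
  ring

lemma lap_weight (p : ℝ) (x : E3) :
    lap (weight p) x
      = 2 * p * (3 * weight (p - 1) x + 2 * (p - 1) * ‖x‖ ^ 2 * weight (p - 2) x) := by
  have hdiff : DifferentiableAt ℝ (weight (p - 1)) x :=
    (contDiff_weight (n := 1) _).differentiable one_ne_zero x
  simp only [lap, pd_weight, pd_coord_mul hdiff, EuclideanSpace.real_norm_sq_eq, Fin.sum_univ_three]
  rw [show p - 1 - 1 = p - 2 by ring]
  ring

lemma max_sq_le_one_add_sq (a : ℝ) : max a 1 ^ 2 ≤ 1 + a ^ 2 := by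
  rcases le_total a 1 with h | h <;> simp [h, sq_nonneg]

lemma one_add_sq_le_two_mul_max_sq {a : ℝ} (ha : 0 ≤ a) : 1 + a ^ 2 ≤ 2 * max a 1 ^ 2 := by
  rcases le_total a 1 with h | h
  · simp only [max_eq_right h]; nlinarith
  · simp only [max_eq_left h]; nlinarith

lemma max_norm_one_rpow_two_mul (x : E3) (q : ℝ) :
    max ‖x‖ 1 ^ (2 * q) = (max ‖x‖ 1 ^ 2) ^ q := by
  exact_mod_cast Real.rpow_natCast_mul (by positivity) 2 q

lemma weight_le {q : ℝ} (hq : q ≤ 0) (x : E3) : weight q x ≤ max ‖x‖ 1 ^ (2 * q) := by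
  rw [max_norm_one_rpow_two_mul]
  exact Real.rpow_le_rpow_of_nonpos (by positivity) (max_sq_le_one_add_sq _) hq

lemma le_weight {q : ℝ} (hq : q ≤ 0) (x : E3) :
    2 ^ q * max ‖x‖ 1 ^ (2 * q) ≤ weight q x := by
  rw [max_norm_one_rpow_two_mul, ← Real.mul_rpow (by norm_num) (by positivity)]
  exact Real.rpow_le_rpow_of_nonpos (one_add_norm_sq_pos x)
    (one_add_sq_le_two_mul_max_sq (norm_nonneg x)) hq

lemma tendsto_weight {q : ℝ} (hq : q < 0) :
    Tendsto (weight q) (comap (fun x : E3 => ‖x‖) atTop) (𝓝 0) := by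
  have h : Tendsto (fun a : ℝ => (1 + a ^ 2) ^ q) atTop (𝓝 0) := by
    simpa only [neg_neg, Function.comp_def] using (tendsto_rpow_neg_atTop (neg_pos.mpr hq)).comp
      (tendsto_atTop_add_const_left _ 1 (tendsto_pow_atTop two_ne_zero))
  exact h.comp tendsto_comap

lemma mul_weight_le_schrodingerOp {θ : ℝ} (hθ : 0 ≤ θ) (x : E3) :
    (2 - θ) * (1 + θ) * weight (-θ / 2 - 1) x
      ≤ schrodingerOp (fun x => 2 / max ‖x‖ 1 ^ 2) (weight (-θ / 2)) x := by
  set t := 1 + ‖x‖ ^ 2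
  set A := weight (-θ / 2 - 1) x
  have ht : 0 < t := one_add_norm_sq_pos x
  have hA : 0 < A := Real.rpow_pos_of_pos ht _
  have hr : 0 < max ‖x‖ 1 ^ 2 := by positivity
  have hAp : weight (-θ / 2) x = A * t := by
    rw [← weight_add_one]; ring_nf
  have hAm : weight (-θ / 2 - 2) x = A / t := by
    rw [← weight_sub_one]; ring_nf
  have hs : ‖x‖ ^ 2 / t ≤ 1 := (div_le_one ht).mpr (by linarith)
  have hrt : 1 ≤ t / max ‖x‖ 1 ^ 2 := (one_le_div hr).mpr (max_sq_le_one_add_sq _)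
  -- `‖x‖² ≤ 1 + ‖x‖²` and `r² ≤ 1 + ‖x‖²` reduce the bracket to
  -- `3θ - θ(θ + 2) + 2 = (2 - θ)(1 + θ)`.
  have key : (2 - θ) * (1 + θ)
      ≤ 3 * θ - θ * (θ + 2) * (‖x‖ ^ 2 / t) + 2 * (t / max ‖x‖ 1 ^ 2) := by
    nlinarith [mul_nonneg hθ (by linarith : (0 : ℝ) ≤ θ + 2)]
  calc (2 - θ) * (1 + θ) * A
      ≤ (3 * θ - θ * (θ + 2) * (‖x‖ ^ 2 / t) + 2 * (t / max ‖x‖ 1 ^ 2)) * A :=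
        mul_le_mul_of_nonneg_right key hA.le
    _ = schrodingerOp (fun x => 2 / max ‖x‖ 1 ^ 2) (weight (-θ / 2)) x := by
        rw [schrodingerOp, lap_weight, hAp, hAm, show weight (-θ / 2 - 1) x = A from rfl]
        field_simp
        ring

lemma rpow_le_schrodingerOp_weight {θ : ℝ} (hθ : θ ∈ Set.Icc (0 : ℝ) 2) (x : E3) :
    2 ^ (-θ / 2 - 1) * ((2 - θ) * (1 + θ)) * max ‖x‖ 1 ^ (-θ - 2)
      ≤ schrodingerOp (fun x => 2 / max ‖x‖ 1 ^ 2) (weight (-θ / 2)) x := by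
  have h := le_weight (q := -θ / 2 - 1) (by linarith [hθ.1]) x
  rw [show 2 * (-θ / 2 - 1) = -θ - 2 by ring] at h
  calc 2 ^ (-θ / 2 - 1) * ((2 - θ) * (1 + θ)) * max ‖x‖ 1 ^ (-θ - 2)
      = (2 - θ) * (1 + θ) * (2 ^ (-θ / 2 - 1) * max ‖x‖ 1 ^ (-θ - 2)) := by ring
    _ ≤ (2 - θ) * (1 + θ) * weight (-θ / 2 - 1) x := by
        gcongr
        exact mul_nonneg (by linarith [hθ.2]) (by linarith [hθ.1])
    _ ≤ _ := mul_weight_le_schrodingerOp hθ.1 x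

/-- let `θ ∈ (0,2)` and `w` be `C²` with `w → 0` at infinity and
`|-Δw + (2/r²)w| ≤ K r^{-θ-2}` where `r(x) = max(|x|,1)`. Then `|w| ≤ C K r^{-θ}`,
with `C` depending only on `θ`. -/
theorem stmt11 (θ : ℝ) (hθ : θ ∈ Set.Ioo (0 : ℝ) 2) :
    ∃ C : ℝ, ∀ (w : E3 → ℝ) (K : ℝ), ContDiff ℝ 2 w →
      (∀ x : E3, |(-(lap w x) + 2 / (max ‖x‖ 1) ^ 2 * w x)| ≤ K * (max ‖x‖ 1) ^ (-θ - 2)) →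
      Tendsto w (Filter.comap (fun x : E3 => ‖x‖) atTop) (𝓝 0) →
      ∀ x : E3, |w x| ≤ C * K * (max ‖x‖ 1) ^ (-θ) := by
  obtain ⟨hθ0, hθ2⟩ := hθ
  set c : ℝ := 2 ^ (-θ / 2 - 1) * ((2 - θ) * (1 + θ))
  have hc : 0 < c := mul_pos (by positivity) (mul_pos (by linarith) (by linarith))
  refine ⟨c⁻¹, fun w K hw hLw hw0 x => ?_⟩
  have hK : 0 ≤ K := by simpa using (abs_nonneg _).trans (hLw 0)
  have hCK : 0 ≤ c⁻¹ * K := mul_nonneg (inv_pos.mpr hc).le hK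
  set u := (c⁻¹ * K) • weight (-θ / 2)
  have hu : ContDiff ℝ 2 u := (contDiff_weight (-θ / 2)).const_smul (c⁻¹ * K)
  have hu0 : Tendsto u (comap (fun x : E3 => ‖x‖) atTop) (𝓝 0) := by
    have := (tendsto_weight (q := -θ / 2) (by linarith)).const_smul (c⁻¹ * K)
    rwa [smul_zero] at this
  have hLu (y : E3) :
      K * max ‖y‖ 1 ^ (-θ - 2) ≤ schrodingerOp (fun x => 2 / max ‖x‖ 1 ^ 2) u y := by
    rw [schrodingerOp_const_smul]
    calc K * max ‖y‖ 1 ^ (-θ - 2) = c⁻¹ * K * (c * max ‖y‖ 1 ^ (-θ - 2)) := by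
          field_simp
      _ ≤ _ := mul_le_mul_of_nonneg_left
          (rpow_le_schrodingerOp_weight (Set.Ioo_subset_Icc_self ⟨hθ0, hθ2⟩) y) hCK
  have hφ := weight_le (q := -θ / 2) (by linarith) x
  rw [show 2 * (-θ / 2) = -θ by ring] at hφ
  calc |w x| ≤ u x := abs_le_of_abs_schrodingerOp_le (fun x => by positivity) hu hw
        (fun y => (hLw y).trans (hLu y)) hu0 hw0 x
    _ ≤ c⁻¹ * K * max ‖x‖ 1 ^ (-θ) := mul_le_mul_of_nonneg_left hφ hCK
end
end
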